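/- The chromatic index of H^{-11,2}_{3,1} equals 11. -/

import Mathlib

/-- The integral sum graph on vertex set `{r, ..., s} ⊆ ℤ`:
distinct `u, v` are adjacent iff `u + v` also lies in `{r, ..., s}`. -/
def intervalSumGraph (r s : ℤ) : SimpleGraph ℤ where
  Adj u v := u ≠ v ∧ u ∈ Set.Icc r s ∧ v ∈ Set.Icc r s ∧ u + v ∈ Set.Icc r s
  symm := ⟨by
    rintro u v ⟨h1, h2, h3, h4⟩
    exact ⟨h1.symm, h3, h2, by rwa [add_comm]⟩⟩
  loopless := ⟨fun u h => h.1 rfl⟩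

/-- The graph `H^{-i,s}_{m,j}`: obtained from the integral sum graph `G_{-i,s}`
by deleting the vertices `-m` and `j` and all edges whose endpoint labels sum
to `-m` or to `j`. -/
def HGraph (i s m j : ℤ) : SimpleGraph ℤ where
  Adj u v := u ≠ v ∧ u ∈ Set.Icc (-i) s ∧ v ∈ Set.Icc (-i) s ∧ u + v ∈ Set.Icc (-i) s ∧
    u ≠ -m ∧ v ≠ -m ∧ u ≠ j ∧ v ≠ j ∧ u + v ≠ -m ∧ u + v ≠ j
  symm := ⟨by
    rintro u v ⟨h1, h2, h3, h4, h5, h6, h7, h8, h9, h10⟩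
    exact ⟨h1.symm, h3, h2, by rwa [add_comm], h6, h5, h8, h7,
      by rwa [add_comm], by rwa [add_comm]⟩⟩
  loopless := ⟨fun u h => h.1 rfl⟩

/-- The chromatic index of a graph: the least `n` such that there is a proper
edge coloring with `n` colors (distinct edges sharing a vertex get distinct colors). -/
noncomputable def chromaticIndex {V : Type*} (G : SimpleGraph V) : ℕ :=
  sInf {n : ℕ | ∃ c : Sym2 V → Fin n,
    ∀ e ∈ G.edgeSet, ∀ f ∈ G.edgeSet, e ≠ f → (∃ v, v ∈ e ∧ v ∈ f) → c e ≠ c f}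

/-- The sum of the two endpoint labels of an edge. -/
def edgeSum (e : Sym2 ℤ) : ℤ := Sym2.lift ⟨fun a b => a + b, fun a b => add_comm a b⟩ e

/-- The edge-sum chromatic number: the number of nonempty edge-sum color classes. -/
noncomputable def edgeSumChromatic (G : SimpleGraph ℤ) : ℕ :=
  {k : ℤ | ∃ e ∈ G.edgeSet, edgeSum e = k}.ncard

/-!
The vertex `0` of `H = H^{-11,2}_{3,1}` is adjacent to the eleven vertices
`-11, …, -4, -2, -1, 2`, so `χ'(H) ≥ 11`. Conversely, colouring every edge by the sum of its
endpoints is always proper, since two edges at a common vertex with equal sums coincide. The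
twelve sums occurring in `H` are `-11, …, -4, -2, -1, 0, 2`, and the classes of the sums `-1`
and `0` are the single edges `{-1, 0}` and `{-2, 2}`, which are disjoint; merging them leaves
eleven colours, which are exactly the neighbours of `0`.
-/

section EdgeColoring

variable {V β : Type*}

def IsProperEdgeColoring (G : SimpleGraph V) (c : Sym2 V → β) : Prop :=
  ∀ e ∈ G.edgeSet, ∀ f ∈ G.edgeSet, e ≠ f → (∃ v, v ∈ e ∧ v ∈ f) → c e ≠ c f

theorem IsProperEdgeColoring.card_le [Fintype β] {G : SimpleGraph V} {c : Sym2 V → β}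
    (hc : IsProperEdgeColoring G c) {v : V} {s : Finset V} (hs : ∀ w ∈ s, G.Adj v w) :
    s.card ≤ Fintype.card β := by
  have hinj : Set.InjOn (fun w => c s(v, w)) s := by
    intro w hw w' hw' hcol
    by_contra hne
    exact hc _ (hs w hw) _ (hs w' hw') (mt Sym2.congr_right.mp hne)
      ⟨v, Sym2.mem_mk_left v w, Sym2.mem_mk_left v w'⟩ hcol
  simpa using Finset.card_le_card_of_injOn _ (fun _ _ => Finset.mem_univ _) hinj

theorem IsProperEdgeColoring.exists_fin {G : SimpleGraph V} {c : Sym2 V → β}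
    (hc : IsProperEdgeColoring G c) {T : Finset β} (hT : T.Nonempty)
    (hcT : ∀ e ∈ G.edgeSet, c e ∈ T) :
    ∃ c' : Sym2 V → Fin T.card, IsProperEdgeColoring G c' := by
  classical
  refine ⟨fun e => if h : c e ∈ T then T.equivFin ⟨c e, h⟩ else ⟨0, hT.card_pos⟩, ?_⟩
  intro e he f hf hne hef hcol
  simp only [hcT e he, hcT f hf, dite_true, EmbeddingLike.apply_eq_iff_eq, Subtype.mk.injEq]
    at hcol
  exact hc e he f hf hne hef hcol

theorem le_chromaticIndex {G : SimpleGraph V} {n : ℕ}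
    (hn : ∃ c : Sym2 V → Fin n, IsProperEdgeColoring G c) {v : V} {s : Finset V}
    (hs : ∀ w ∈ s, G.Adj v w) : s.card ≤ chromaticIndex G := by
  obtain ⟨c, hc⟩ := Nat.sInf_mem (s := {n | ∃ c : Sym2 V → Fin n, IsProperEdgeColoring G c})
    ⟨n, hn⟩
  exact (hc.card_le hs).trans_eq (Fintype.card_fin _)

theorem chromaticIndex_eq_of_isProperEdgeColoring {G : SimpleGraph V} {c : Sym2 V → β}
    (hc : IsProperEdgeColoring G c) {T : Finset β} (hT : T.Nonempty)
    (hcT : ∀ e ∈ G.edgeSet, c e ∈ T) {v : V} {s : Finset V} (hs : ∀ w ∈ s, G.Adj v w)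
    (hTs : T.card ≤ s.card) : chromaticIndex G = T.card := by
  have hfin := hc.exists_fin hT hcT
  exact le_antisymm (Nat.sInf_le hfin) (hTs.trans (le_chromaticIndex hfin hs))

end EdgeColoring

def zeroNeighbors : Finset ℤ := {-11, -10, -9, -8, -7, -6, -5, -4, -2, -1, 2}

def mergedEdgeSum (e : Sym2 ℤ) : ℤ := if edgeSum e = 0 then -1 else edgeSum e

theorem mergedEdgeSum_mk (a b : ℤ) :
    mergedEdgeSum s(a, b) = if a + b = 0 then -1 else a + b :=
  rfl

theorem hGraph_adj {i s m j u v : ℤ} :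
    (HGraph i s m j).Adj u v ↔ u ≠ v ∧ (-i ≤ u ∧ u ≤ s) ∧ (-i ≤ v ∧ v ≤ s) ∧
      (-i ≤ u + v ∧ u + v ≤ s) ∧ u ≠ -m ∧ v ≠ -m ∧ u ≠ j ∧ v ≠ j ∧ u + v ≠ -m ∧ u + v ≠ j :=
  Iff.rfl

theorem isProperEdgeColoring_mergedEdgeSum :
    IsProperEdgeColoring (HGraph 11 2 3 1) mergedEdgeSum := by
  rintro e he f hf hne ⟨v, hve, hvf⟩
  obtain ⟨a, rfl⟩ := hve
  obtain ⟨b, rfl⟩ := hvf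
  have hab : a ≠ b := fun h => hne (h ▸ rfl)
  rw [SimpleGraph.mem_edgeSet, hGraph_adj] at he hf
  obtain ⟨hva, ⟨-, hv⟩, ⟨-, ha⟩, -, -, ha3, hv1, ha1, -, -⟩ := he
  obtain ⟨hvb, -, ⟨-, hb⟩, -, -, hb3, -, hb1, -, -⟩ := hf
  rw [mergedEdgeSum_mk, mergedEdgeSum_mk]
  -- `v + a = 0` and `v + b = -1` would force `v = ±2`, hence `b ∈ {-3, 1}`.
  intro hcol
  split_ifs at hcol <;> omega

theorem mergedEdgeSum_mem {e : Sym2 ℤ} (he : e ∈ (HGraph 11 2 3 1).edgeSet) :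
    mergedEdgeSum e ∈ zeroNeighbors := by
  induction e using Sym2.ind with
  | _ u v =>
    rw [SimpleGraph.mem_edgeSet, hGraph_adj] at he
    obtain ⟨-, -, -, ⟨hlo, hhi⟩, -, -, -, -, hne3, hne1⟩ := he
    rw [mergedEdgeSum_mk]
    split_ifs
    · decide
    · simp only [zeroNeighbors, Finset.mem_insert, Finset.mem_singleton]
      omega

theorem hGraph_adj_zero {w : ℤ} (hw : w ∈ zeroNeighbors) :
    (HGraph 11 2 3 1).Adj 0 w := by
  simp only [zeroNeighbors, Finset.mem_insert, Finset.mem_singleton] at hw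
  rw [hGraph_adj]
  omega

theorem chromaticIndex_H_11_2_3_1 : chromaticIndex (HGraph 11 2 3 1) = 11 :=
  chromaticIndex_eq_of_isProperEdgeColoring isProperEdgeColoring_mergedEdgeSum ⟨2, by decide⟩
    (fun _ => mergedEdgeSum_mem) (fun _ => hGraph_adj_zero) le_rfl
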